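/- Let p be prime and H = k[∂]/(∂^p) over a field k of characteristic p, with graded modules Ṽ_i (0 ≤ i ≤ p-1) of dimension i+1 given by basis w_0,...,w_i, ∂(w_j) = w_{j+1}, ∂(w_i) = 0. Then for 0 ≤ i ≤ p-2 the tensor product Ṽ_1 ⊗ Ṽ_i decomposes as an H-module: Ṽ_1 ⊗ Ṽ_i ≅ Ṽ_{i+1} ⊕ Ṽ_{i-1} if 1 ≤ i ≤ p-2, and Ṽ_1 ⊗ Ṽ_0 ≅ Ṽ_1, where ∂ acts on a tensor product by the Leibniz rule ∂(x⊗y) = ∂x⊗y + x⊗∂y (ignoring the internal grading). -/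

import Mathlib

/-!
On `Ṽ_1 ⊗ Ṽ_{n+1}` the Leibniz operator `∂` has the Jordan chain `X_j = ∂^j (w₀ ⊗ w₀)`, killed by
`∂^(n+3)`, and the Jordan chain `Y_j = ∂^j (w₀ ⊗ w₁ - (n+1) w₁ ⊗ w₀)`, killed by `∂^(n+1)`;
they define an `H`-linear map `Ṽ_{n+2} ⊕ Ṽ_n → Ṽ_1 ⊗ Ṽ_{n+1}`. As `X_{j+1} - Y_j = (n+2) w₁ ⊗ w_j`
and `n + 2 < p`, the chains span the tensor product, so by counting dimensions the map is an
isomorphism. On `Ṽ_0` the operator `∂` is zero, whence `Ṽ_1 ⊗ Ṽ_0 ≅ Ṽ_1`.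
-/

open scoped TensorProduct

namespace JordanBlock

variable (R : Type*) [CommSemiring R]

/-- The basis vector `w_a` of `Ṽ_m = R^(m+1)`, taken to be `0` when `a > m`. -/
noncomputable def basisVec (m a : ℕ) : Fin (m + 1) → R :=
  if h : a < m + 1 then Pi.single ⟨a, h⟩ 1 else 0

noncomputable def shift (m : ℕ) : Module.End R (Fin (m + 1) → R) :=
  (Pi.basisFun R (Fin (m + 1))).constr R fun j => basisVec R m (j + 1)

variable {R} {m a : ℕ}

lemma basisVec_of_lt (h : a < m + 1) : basisVec R m a = Pi.single ⟨a, h⟩ 1 := dif_pos h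

lemma basisVec_of_le (h : m + 1 ≤ a) : basisVec R m a = 0 := dif_neg (by omega)

lemma basisVec_succ_self (m : ℕ) : basisVec R m (m + 1) = 0 := basisVec_of_le le_rfl

lemma basisVec_val (j : Fin (m + 1)) : basisVec R m j = Pi.single j 1 := basisVec_of_lt j.isLt

lemma shift_single (j : Fin (m + 1)) : shift R m (Pi.single j 1) = basisVec R m (j + 1) := by
  rw [← Pi.basisFun_apply, shift, Module.Basis.constr_basis]

lemma shift_basisVec (m a : ℕ) : shift R m (basisVec R m a) = basisVec R m (a + 1) := by
  by_cases h : a < m + 1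
  · rw [basisVec_of_lt h, shift_single]
  · rw [basisVec_of_le (by omega), basisVec_of_le (by omega), map_zero]

lemma eq_shift_of_apply_single {f : Module.End R (Fin (m + 1) → R)}
    (hf : ∀ j : Fin (m + 1), f (Pi.single j 1) =
      if h : (j : ℕ) + 1 < m + 1 then Pi.single (⟨(j : ℕ) + 1, h⟩ : Fin (m + 1)) 1 else 0) :
    f = shift R m :=
  (Pi.basisFun R _).ext fun j => by rw [Pi.basisFun_apply, hf, shift_single]; rfl

lemma shift_zero : shift R 0 = 0 :=
  (Pi.basisFun R _).ext fun j => by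
    rw [Pi.basisFun_apply, shift_single, basisVec_of_le (by omega), LinearMap.zero_apply]

variable {M : Type*} [AddCommMonoid M] [Module R M]

noncomputable def chainLift (x : ℕ → M) (m : ℕ) : (Fin (m + 1) → R) →ₗ[R] M :=
  (Pi.basisFun R (Fin (m + 1))).constr R fun j => x j

lemma chainLift_basisVec (x : ℕ → M) (h : a < m + 1) : chainLift x m (basisVec R m a) = x a := by
  rw [basisVec_of_lt h, ← Pi.basisFun_apply, chainLift, Module.Basis.constr_basis]

lemma comp_chainLift {T : Module.End R M} {x : ℕ → M} (hx : ∀ j ≤ m, T (x j) = x (j + 1))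
    (hm : x (m + 1) = 0) : T ∘ₗ chainLift x m = chainLift x m ∘ₗ shift R m := by
  refine (Pi.basisFun R _).ext fun j => ?_
  rw [LinearMap.comp_apply, LinearMap.comp_apply, Pi.basisFun_apply, shift_single,
    ← basisVec_val, chainLift_basisVec x j.isLt, hx j (by omega)]
  by_cases h : (j : ℕ) + 1 < m + 1
  · rw [chainLift_basisVec x h]
  · rw [basisVec_of_le (by omega), map_zero, show (j : ℕ) + 1 = m + 1 by omega, hm]

end JordanBlock

open JordanBlock

section Leibniz

variable {R M N : Type*} [CommSemiring R] [AddCommMonoid M] [Module R M] [AddCommMonoid N]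
  [Module R N]

def leibniz (S : Module.End R M) (T : Module.End R N) : Module.End R (M ⊗[R] N) :=
  S.rTensor N + T.lTensor M

@[simp]
lemma leibniz_tmul (S : Module.End R M) (T : Module.End R N) (x : M) (y : N) :
    leibniz S T (x ⊗ₜ y) = S x ⊗ₜ y + x ⊗ₜ T y := rfl

lemma exists_linearEquiv_conj_of_bijective {S : Module.End R M} {T : Module.End R N}
    {g : M →ₗ[R] N} (hg : Function.Bijective g) (hgST : T ∘ₗ g = g ∘ₗ S) :
    ∃ f : N ≃ₗ[R] M, ∀ x, f (T x) = S (f x) := by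
  refine ⟨(LinearEquiv.ofBijective g hg).symm, fun x => ?_⟩
  obtain ⟨y, rfl⟩ := hg.2 x
  have hgS : T (g y) = g (S y) := LinearMap.congr_fun hgST y
  rw [hgS, LinearEquiv.ofBijective_symm_apply_apply, LinearEquiv.ofBijective_symm_apply_apply]

lemma exists_linearEquiv_tensor_fin_one (S : Module.End R M) :
    ∃ f : (M ⊗[R] (Fin 1 → R)) ≃ₗ[R] M, ∀ x, f (leibniz S 0 x) = S (f x) := by
  refine ⟨(LinearEquiv.lTensor M (LinearEquiv.funUnique (Fin 1) R R)).trans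
    (TensorProduct.rid R M), fun x => ?_⟩
  induction x using TensorProduct.induction_on with
  | zero => simp
  | tmul x c => simp
  | add x y hx hy => simp only [map_add, hx, hy]

end Leibniz

section ClebschGordan

variable {R : Type*} [CommRing R]

/-- `X_j = ∂^j (w₀ ⊗ w₀)` in closed form. -/
noncomputable def highChain (n j : ℕ) : (Fin 2 → R) ⊗[R] (Fin (n + 2) → R) :=
  basisVec R 1 0 ⊗ₜ basisVec R (n + 1) j + (j : R) • basisVec R 1 1 ⊗ₜ basisVec R (n + 1) (j - 1)

/-- `Y_j = ∂^j (w₀ ⊗ w₁ - (n+1) w₁ ⊗ w₀)` in closed form. -/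
noncomputable def lowChain (n j : ℕ) : (Fin 2 → R) ⊗[R] (Fin (n + 2) → R) :=
  basisVec R 1 0 ⊗ₜ basisVec R (n + 1) (j + 1) +
    ((j : R) - (n + 1 : ℕ)) • basisVec R 1 1 ⊗ₜ basisVec R (n + 1) j

lemma leibniz_highChain (n j : ℕ) :
    leibniz (shift R 1) (shift R (n + 1)) (highChain n j) = highChain n (j + 1) := by
  rcases j with _ | j
  · simp only [highChain, map_add, map_smul, leibniz_tmul, shift_basisVec, basisVec_succ_self,
      TensorProduct.zero_tmul]
    push_cast
    module
  · simp only [highChain, map_add, map_smul, leibniz_tmul, shift_basisVec, basisVec_succ_self,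
      TensorProduct.zero_tmul, Nat.add_sub_cancel]
    push_cast
    module

lemma leibniz_lowChain (n j : ℕ) :
    leibniz (shift R 1) (shift R (n + 1)) (lowChain n j) = lowChain n (j + 1) := by
  simp only [lowChain, map_add, map_smul, leibniz_tmul, shift_basisVec, basisVec_succ_self,
    TensorProduct.zero_tmul]
  push_cast
  module

lemma highChain_eq_zero (n : ℕ) : highChain (R := R) n (n + 3) = 0 := by
  simp [highChain, basisVec_of_le]

lemma lowChain_eq_zero (n : ℕ) : lowChain (R := R) n (n + 1) = 0 := by
  simp [lowChain, basisVec_of_le]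

lemma highChain_succ_sub_lowChain (n j : ℕ) :
    highChain (R := R) n (j + 1) - lowChain n j =
      ((n + 2 : ℕ) : R) • basisVec R 1 1 ⊗ₜ basisVec R (n + 1) j := by
  simp only [highChain, lowChain, Nat.add_sub_cancel]
  push_cast
  module

noncomputable def clebschGordanMap (n : ℕ) :
    ((Fin (n + 3) → R) × (Fin (n + 1) → R)) →ₗ[R] (Fin 2 → R) ⊗[R] (Fin (n + 2) → R) :=
  (chainLift (highChain n) (n + 2)).coprod (chainLift (lowChain n) n)

lemma leibniz_comp_clebschGordanMap (n : ℕ) :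
    leibniz (shift R 1) (shift R (n + 1)) ∘ₗ clebschGordanMap n =
      clebschGordanMap n ∘ₗ (shift R (n + 2)).prodMap (shift R n) := by
  have high := comp_chainLift (fun j _ => leibniz_highChain n j) (highChain_eq_zero (R := R) n)
  have low := comp_chainLift (fun j _ => leibniz_lowChain n j) (lowChain_eq_zero (R := R) n)
  rw [clebschGordanMap, LinearMap.comp_coprod, high, low]
  apply LinearMap.prod_ext <;> rfl

variable {k : Type*} [Field k]

lemma clebschGordanMap_surjective {n : ℕ} (hn : ((n + 2 : ℕ) : k) ≠ 0) :
    Function.Surjective (clebschGordanMap (R := k) n) := by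
  set P := LinearMap.range (clebschGordanMap (R := k) n)
  have high_mem (j : ℕ) (hj : j < n + 3) : highChain n j ∈ P :=
    ⟨(basisVec k (n + 2) j, 0), by simp [clebschGordanMap, chainLift_basisVec _ hj]⟩
  have low_mem (j : ℕ) (hj : j < n + 2) : lowChain n j ∈ P := by
    rcases Nat.lt_succ_iff_lt_or_eq.mp hj with hj | rfl
    · exact ⟨(0, basisVec k n j), by simp [clebschGordanMap, chainLift_basisVec _ hj]⟩
    · rw [lowChain_eq_zero]
      exact P.zero_mem
  have one_mem (j : ℕ) (hj : j < n + 2) : basisVec k 1 1 ⊗ₜ basisVec k (n + 1) j ∈ P := by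
    rw [← inv_smul_smul₀ hn (_ ⊗ₜ _), ← highChain_succ_sub_lowChain]
    exact P.smul_mem _ (P.sub_mem (high_mem _ (by omega)) (low_mem j hj))
  have zero_mem (j : ℕ) (hj : j < n + 2) : basisVec k 1 0 ⊗ₜ basisVec k (n + 1) j ∈ P := by
    rw [← add_sub_cancel_right (_ ⊗ₜ _) ((j : k) • basisVec k 1 1 ⊗ₜ basisVec k (n + 1) (j - 1))]
    exact P.sub_mem (high_mem j (by omega)) (P.smul_mem _ (one_mem _ (by omega)))
  rw [← LinearMap.range_eq_top, eq_top_iff,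
    ← ((Pi.basisFun k (Fin 2)).tensorProduct (Pi.basisFun k (Fin (n + 2)))).span_eq,
    Submodule.span_le]
  rintro _ ⟨⟨a, j⟩, rfl⟩
  rw [Module.Basis.tensorProduct_apply, Pi.basisFun_apply, Pi.basisFun_apply, ← basisVec_val,
    ← basisVec_val]
  fin_cases a
  · exact zero_mem j j.isLt
  · exact one_mem j j.isLt

lemma clebschGordanMap_bijective {n : ℕ} (hn : ((n + 2 : ℕ) : k) ≠ 0) :
    Function.Bijective (clebschGordanMap (R := k) n) := by
  have hdim : Module.finrank k ((Fin (n + 3) → k) × (Fin (n + 1) → k)) =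
      Module.finrank k ((Fin 2 → k) ⊗[k] (Fin (n + 2) → k)) := by
    simp only [Module.finrank_prod, Module.finrank_tensorProduct, Module.finrank_fin_fun]
    ring
  have hsurj := clebschGordanMap_surjective hn
  exact ⟨(LinearMap.injective_iff_surjective_of_finrank_eq_finrank hdim).mpr hsurj, hsurj⟩

end ClebschGordan

theorem tensor_decomposition_H_modules_general (p : ℕ)
    (k : Type*) [Field k] [CharP k p]
    (D : ∀ m : ℕ, Module.End k (Fin (m + 1) → k))
    (hD : ∀ (m : ℕ) (j : Fin (m + 1)), D m (Pi.single j 1) =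
      if h : (j : ℕ) + 1 < m + 1 then Pi.single (⟨(j : ℕ) + 1, h⟩ : Fin (m + 1)) 1 else 0) :
    (∀ i' : ℕ, i' + 1 ≤ p - 2 →
      ∃ f : ((Fin 2 → k) ⊗[k] (Fin (i' + 2) → k)) ≃ₗ[k] ((Fin (i' + 3) → k) × (Fin (i' + 1) → k)),
        ∀ x, f ((LinearMap.rTensor (Fin (i' + 2) → k) (D 1) +
                  LinearMap.lTensor (Fin 2 → k) (D (i' + 1))) x) =
          ((D (i' + 2)) (f x).1, (D i') (f x).2)) ∧
    (∃ f : ((Fin 2 → k) ⊗[k] (Fin 1 → k)) ≃ₗ[k] (Fin 2 → k),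
        ∀ x, f ((LinearMap.rTensor (Fin 1 → k) (D 1) +
                  LinearMap.lTensor (Fin 2 → k) (D 0)) x) = (D 1) (f x)) := by
  obtain rfl : D = shift k := funext fun m => eq_shift_of_apply_single (hD m)
  refine ⟨fun n hn => ?_, ?_⟩
  · have hchar : ((n + 2 : ℕ) : k) ≠ 0 := by
      rw [Ne, CharP.cast_eq_zero_iff k p]
      exact Nat.not_dvd_of_pos_of_lt (by omega) (by omega)
    exact exists_linearEquiv_conj_of_bijective (clebschGordanMap_bijective hchar)
      (leibniz_comp_clebschGordanMap n)
  · rw [shift_zero]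
    exact exists_linearEquiv_tensor_fin_one (shift k 1)

/-- Clebsch–Gordan-type decomposition for `H = k[∂]/(∂^p)`: writing `Ṽ_m` for the
`(m+1)`-dimensional indecomposable `H`-module (a single Jordan block for `∂`), for
`1 ≤ i ≤ p-2` there is an isomorphism `Ṽ_1 ⊗ Ṽ_i ≅ Ṽ_{i+1} ⊕ Ṽ_{i-1}` intertwining the
tensor-product differential `∂(x⊗y) = ∂x⊗y + x⊗∂y`, and `Ṽ_1 ⊗ Ṽ_0 ≅ Ṽ_1`. -/
theorem tensor_decomposition_H_modules (p : ℕ) (hp : p.Prime)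
    (k : Type*) [Field k] [CharP k p]
    (D : ∀ m : ℕ, Module.End k (Fin (m + 1) → k))
    (hD : ∀ (m : ℕ) (j : Fin (m + 1)), D m (Pi.single j 1) =
      if h : (j : ℕ) + 1 < m + 1 then Pi.single (⟨(j : ℕ) + 1, h⟩ : Fin (m + 1)) 1 else 0) :
    (∀ i' : ℕ, i' + 1 ≤ p - 2 →
      ∃ f : ((Fin 2 → k) ⊗[k] (Fin (i' + 2) → k)) ≃ₗ[k] ((Fin (i' + 3) → k) × (Fin (i' + 1) → k)),
        ∀ x, f ((LinearMap.rTensor (Fin (i' + 2) → k) (D 1) +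
                  LinearMap.lTensor (Fin 2 → k) (D (i' + 1))) x) =
          ((D (i' + 2)) (f x).1, (D i') (f x).2)) ∧
    (∃ f : ((Fin 2 → k) ⊗[k] (Fin 1 → k)) ≃ₗ[k] (Fin 2 → k),
        ∀ x, f ((LinearMap.rTensor (Fin 1 → k) (D 1) +
                  LinearMap.lTensor (Fin 2 → k) (D 0)) x) = (D 1) (f x)) :=
  tensor_decomposition_H_modules_general p k D hD
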